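/- arXiv:1705.01456 — 2 statements merged into one kernel-verified Lean document; each statement's English description precedes it below -/
import Mathlib

section
/- Let $X = [-R_1, R_1] \times [R_0, \infty)$ and let $H = (h_1, h_2) : X \to \mathbb{R}^2$ be $C^1$ with $\|h_1\|_X \le R_1/2$, $\|h_2\|_X \le c_0$, and all entries of $\nabla H$ bounded by $1/10$ on $X$, where $c_0 > 0$. Define $T$ on the space $\Gamma$ of $1$-Lipschitz curves $\gamma : [R_0,\infty) \to [-R_1,R_1]$ by applying the map $(a,b) \mapsto (-a/2 + h_1(a,b), b - c_0 + h_2(a,b))$ to the graph of $\gamma$ and restricting to $b \ge R_0$. Then $T$ maps $\Gamma$ to $\Gamma$ and is a contraction with constant at most $\frac{1}{2} + \frac{\sqrt{2}}{5} < 1$ in the sup metric; consequently $T$ has a unique fixed point $\gamma^{inv} \in \Gamma$. -/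
open Set Filter Topology

/-- Mean value estimate with `ℓ¹`-type bound from partial-derivative bounds. -/
lemma mvt10 {X : Set (ℝ × ℝ)} (hconv : Convex ℝ X) {h : ℝ × ℝ → ℝ}
    {D : ℝ × ℝ → ℝ × ℝ →L[ℝ] ℝ}
    (hdh : ∀ p ∈ X, HasFDerivWithinAt h (D p) X p)
    (hb : ∀ p ∈ X, |D p (1, 0)| ≤ 1 / 10 ∧ |D p (0, 1)| ≤ 1 / 10)
    {p q : ℝ × ℝ} (hp : p ∈ X) (hq : q ∈ X) :
    |h p - h q| ≤ (|p.1 - q.1| + |p.2 - q.2|) / 10 := by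
  set l : ℝ → ℝ × ℝ := fun τ => q + τ • (p - q) with hl
  have hlmem : ∀ τ ∈ Icc (0:ℝ) 1, l τ ∈ X := by
    intro τ hτ
    have := hconv hq hp (by linarith [hτ.1, hτ.2] : (0:ℝ) ≤ 1 - τ) hτ.1 (by ring)
    convert this using 1
    simp [hl]
    module
  have hderiv : ∀ τ ∈ Icc (0:ℝ) 1,
      HasDerivWithinAt (fun τ => h (l τ)) (D (l τ) (p - q)) (Icc 0 1) τ := by
    intro τ hτ
    have hld : HasDerivWithinAt l (p - q) (Icc 0 1) τ := by
      have : HasDerivAt (fun τ : ℝ => τ • (p - q)) ((1:ℝ) • (p - q)) τ :=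
        (hasDerivAt_id τ).smul_const (p - q)
      simpa [hl] using ((this.const_add q).hasDerivWithinAt)
    exact (hdh (l τ) (hlmem τ hτ)).comp_hasDerivWithinAt τ hld hlmem
  have hbd : ∀ τ ∈ Ico (0:ℝ) 1,
      ‖D (l τ) (p - q)‖ ≤ (|p.1 - q.1| + |p.2 - q.2|) / 10 := by
    intro τ hτ
    have hm := hlmem τ (Ico_subset_Icc_self hτ)
    obtain ⟨b1, b2⟩ := hb _ hm
    have hv : (p - q) = (p.1 - q.1) • ((1:ℝ), (0:ℝ)) + (p.2 - q.2) • ((0:ℝ), (1:ℝ)) := by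
      simp [Prod.ext_iff]
    rw [hv, map_add, map_smul, map_smul]
    simp only [smul_eq_mul, Real.norm_eq_abs]
    calc |(p.1 - q.1) * D (l τ) (1,0) + (p.2 - q.2) * D (l τ) (0,1)|
        ≤ |(p.1 - q.1) * D (l τ) (1,0)| + |(p.2 - q.2) * D (l τ) (0,1)| := abs_add_le _ _
      _ ≤ |p.1 - q.1| * (1/10) + |p.2 - q.2| * (1/10) := by
          rw [abs_mul, abs_mul]
          gcongr
      _ ≤ (|p.1 - q.1| + |p.2 - q.2|) / 10 := by linarith
  have key := norm_image_sub_le_of_norm_deriv_le_segment_01' hderiv hbd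
  have h1 : l 1 = p := by simp [hl]
  have h0 : l 0 = q := by simp [hl]
  rw [h1, h0, Real.norm_eq_abs] at key
  exact key

/-- The graph-transform map `T` induced by `(a,b) ↦ (-a/2 + h₁(a,b), b - c₀ + h₂(a,b))`
maps the space `Γ` of `1`-Lipschitz curves `[R₀,∞) → [-R₁,R₁]` into itself, is a
contraction with constant at most `1/2 + √2/5 < 1` in the sup metric, and hence has a
unique fixed point `γ^inv ∈ Γ`. -/
theorem stmt_12 (R₀ R₁ c₀ : ℝ) (hR₁ : 0 < R₁) (hc₀ : 0 < c₀)
    (h₁ h₂ : ℝ × ℝ → ℝ) (D₁ D₂ : ℝ × ℝ → ℝ × ℝ →L[ℝ] ℝ)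
    (X : Set (ℝ × ℝ)) (hX : X = Set.Icc (-R₁) R₁ ×ˢ Set.Ici R₀)
    (hd₁ : ∀ p ∈ X, HasFDerivWithinAt h₁ (D₁ p) X p)
    (hd₂ : ∀ p ∈ X, HasFDerivWithinAt h₂ (D₂ p) X p)
    (hb₁ : ∀ p ∈ X, |D₁ p (1, 0)| ≤ 1 / 10 ∧ |D₁ p (0, 1)| ≤ 1 / 10)
    (hb₂ : ∀ p ∈ X, |D₂ p (1, 0)| ≤ 1 / 10 ∧ |D₂ p (0, 1)| ≤ 1 / 10)
    (hsup₁ : ∀ p ∈ X, |h₁ p| ≤ R₁ / 2) (hsup₂ : ∀ p ∈ X, |h₂ p| ≤ c₀)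
    (Γ : Set (ℝ → ℝ))
    (hΓ : Γ = {γ : ℝ → ℝ |
      (∀ t ∈ Set.Ici R₀, γ t ∈ Set.Icc (-R₁) R₁) ∧
      (∀ t₁ ∈ Set.Ici R₀, ∀ t₂ ∈ Set.Ici R₀, |γ t₁ - γ t₂| ≤ |t₁ - t₂|)})
    (d : (ℝ → ℝ) → (ℝ → ℝ) → ℝ)
    (hd : ∀ γ₁ γ₂, d γ₁ γ₂ = ⨆ t : Set.Ici R₀, |γ₁ t - γ₂ t|)
    (T : (ℝ → ℝ) → ℝ → ℝ)
    -- the graph of `T γ` over `[R₀,∞)` is contained in the image of the graph of `γ`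
    -- under `(a,b) ↦ (-a/2 + h₁(a,b), b - c₀ + h₂(a,b))`:
    (hT : ∀ γ ∈ Γ, ∀ t ∈ Set.Ici R₀, ∃ s ∈ Set.Ici R₀,
      (-(γ s) / 2 + h₁ (γ s, s), s - c₀ + h₂ (γ s, s)) = (T γ t, t)) :
    (∀ γ ∈ Γ, T γ ∈ Γ) ∧
    (∀ γ₁ ∈ Γ, ∀ γ₂ ∈ Γ, d (T γ₁) (T γ₂) ≤ (1 / 2 + Real.sqrt 2 / 5) * d γ₁ γ₂) ∧
    (1 / 2 + Real.sqrt 2 / 5 < 1) ∧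
    (∃ γinv ∈ Γ, (∀ t ∈ Set.Ici R₀, T γinv t = γinv t) ∧
      ∀ γ' ∈ Γ, (∀ t ∈ Set.Ici R₀, T γ' t = γ' t) →
        ∀ t ∈ Set.Ici R₀, γ' t = γinv t) := by
  have hconv : Convex ℝ X := hX ▸ (convex_Icc _ _).prod (convex_Ici _)
  -- membership of graphs points in X
  have hmemX : ∀ ⦃γ : ℝ → ℝ⦄, γ ∈ Γ → ∀ s, R₀ ≤ s → (γ s, s) ∈ X := by
    intro γ hγ s hs
    rw [hΓ] at hγ
    rw [hX]
    exact ⟨hγ.1 s hs, hs⟩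
  -- mean value estimates
  have H₁ : ∀ p ∈ X, ∀ q ∈ X, |h₁ p - h₁ q| ≤ (|p.1 - q.1| + |p.2 - q.2|) / 10 :=
    fun p hp q hq => mvt10 hconv hd₁ hb₁ hp hq
  have H₂ : ∀ p ∈ X, ∀ q ∈ X, |h₂ p - h₂ q| ≤ (|p.1 - q.1| + |p.2 - q.2|) / 10 :=
    fun p hp q hq => mvt10 hconv hd₂ hb₂ hp hq
  have hne : Nonempty (Set.Ici R₀) := ⟨⟨R₀, Set.self_mem_Ici⟩⟩
  -- basic facts about d
  have dnonneg : ∀ γ₁ γ₂, 0 ≤ d γ₁ γ₂ := by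
    intro γ₁ γ₂
    rw [hd]
    exact Real.iSup_nonneg fun t => abs_nonneg _
  have dle : ∀ γ₁ γ₂ (C : ℝ), (∀ t, R₀ ≤ t → |γ₁ t - γ₂ t| ≤ C) → d γ₁ γ₂ ≤ C := by
    intro γ₁ γ₂ C hC
    rw [hd]
    exact ciSup_le fun t => hC t t.2
  have dpt : ∀ γ₁ ∈ Γ, ∀ γ₂ ∈ Γ, ∀ s, R₀ ≤ s → |γ₁ s - γ₂ s| ≤ d γ₁ γ₂ := by
    intro γ₁ hγ₁ γ₂ hγ₂ s hs
    rw [hΓ] at hγ₁ hγ₂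
    rw [hd]
    refine le_ciSup (f := fun t : Set.Ici R₀ => |γ₁ ↑t - γ₂ ↑t|) ⟨2 * R₁, ?_⟩ ⟨s, hs⟩
    rintro x ⟨t, rfl⟩
    have h1 := hγ₁.1 t t.2
    have h2 := hγ₂.1 t t.2
    rw [Set.mem_Icc] at h1 h2
    rw [abs_le]
    constructor <;> linarith [h1.1, h1.2, h2.1, h2.2]
  -- T maps Γ into Γ
  have hmaps : ∀ γ ∈ Γ, T γ ∈ Γ := by
    intro γ hγ
    have hγ' := hγ
    rw [hΓ] at hγ'
    obtain ⟨hbound, hlip⟩ := hγ'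
    rw [hΓ]
    constructor
    · intro t ht
      obtain ⟨s, hs, heq⟩ := hT γ hγ t ht
      obtain ⟨e1, e2⟩ := Prod.ext_iff.mp heq
      simp only at e1 e2
      have hγs := hbound s hs
      rw [Set.mem_Icc] at hγs
      have hh := hsup₁ (γ s, s) (hmemX hγ s hs)
      rw [abs_le] at hh
      rw [Set.mem_Icc, ← e1]
      constructor <;> linarith [hγs.1, hγs.2, hh.1, hh.2]
    · intro t₁ ht₁ t₂ ht₂
      obtain ⟨s₁, hs₁, heq₁⟩ := hT γ hγ t₁ ht₁
      obtain ⟨s₂, hs₂, heq₂⟩ := hT γ hγ t₂ ht₂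
      obtain ⟨e11, e12⟩ := Prod.ext_iff.mp heq₁
      obtain ⟨e21, e22⟩ := Prod.ext_iff.mp heq₂
      simp only at e11 e12 e21 e22
      have hm₁ := hmemX hγ s₁ hs₁
      have hm₂ := hmemX hγ s₂ hs₂
      have eh2 : |h₂ (γ s₁, s₁) - h₂ (γ s₂, s₂)| ≤ (|γ s₁ - γ s₂| + |s₁ - s₂|) / 10 := by
        simpa using H₂ _ hm₁ _ hm₂
      have eh1 : |h₁ (γ s₁, s₁) - h₁ (γ s₂, s₂)| ≤ (|γ s₁ - γ s₂| + |s₁ - s₂|) / 10 := by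
        simpa using H₁ _ hm₁ _ hm₂
      have lipγ : |γ s₁ - γ s₂| ≤ |s₁ - s₂| := hlip s₁ hs₁ s₂ hs₂
      have tri : |s₁ - s₂| ≤ |t₁ - t₂| + |h₂ (γ s₁, s₁) - h₂ (γ s₂, s₂)| := by
        have hrw : s₁ - s₂ = (t₁ - t₂) - (h₂ (γ s₁, s₁) - h₂ (γ s₂, s₂)) := by
          rw [← e12, ← e22]; ring
        rw [hrw]
        exact abs_sub _ _
      have hA : |s₁ - s₂| ≤ (5/4) * |t₁ - t₂| := by linarith
      have tri2 : |T γ t₁ - T γ t₂| ≤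
          |γ s₁ - γ s₂| / 2 + |h₁ (γ s₁, s₁) - h₁ (γ s₂, s₂)| := by
        have hrw : T γ t₁ - T γ t₂ =
            -(γ s₁ - γ s₂) / 2 + (h₁ (γ s₁, s₁) - h₁ (γ s₂, s₂)) := by
          rw [← e11, ← e21]; ring
        rw [hrw]
        refine (abs_add_le _ _).trans ?_
        rw [abs_div, abs_neg]
        simp only [abs_two]
        norm_num
      have habs : 0 ≤ |t₁ - t₂| := abs_nonneg _
      linarith
  -- pointwise contraction estimate
  have hcontr : ∀ γ₁ ∈ Γ, ∀ γ₂ ∈ Γ, ∀ t, R₀ ≤ t →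
      |T γ₁ t - T γ₂ t| ≤ (11/16) * d γ₁ γ₂ := by
    intro γ₁ hγ₁ γ₂ hγ₂ t ht
    obtain ⟨s₁, hs₁, heq₁⟩ := hT γ₁ hγ₁ t ht
    obtain ⟨s₂, hs₂, heq₂⟩ := hT γ₂ hγ₂ t ht
    obtain ⟨e11, e12⟩ := Prod.ext_iff.mp heq₁
    obtain ⟨e21, e22⟩ := Prod.ext_iff.mp heq₂
    simp only at e11 e12 e21 e22
    have hγ₁' := hγ₁; rw [hΓ] at hγ₁'
    have hm₁ := hmemX hγ₁ s₁ hs₁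
    have hm₂ := hmemX hγ₂ s₂ hs₂
    have hdd : |γ₁ s₂ - γ₂ s₂| ≤ d γ₁ γ₂ := dpt γ₁ hγ₁ γ₂ hγ₂ s₂ hs₂
    have eh2 : |h₂ (γ₁ s₁, s₁) - h₂ (γ₂ s₂, s₂)| ≤ (|γ₁ s₁ - γ₂ s₂| + |s₁ - s₂|) / 10 := by
      simpa using H₂ _ hm₁ _ hm₂
    have eh1 : |h₁ (γ₁ s₁, s₁) - h₁ (γ₂ s₂, s₂)| ≤ (|γ₁ s₁ - γ₂ s₂| + |s₁ - s₂|) / 10 := by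
      simpa using H₁ _ hm₁ _ hm₂
    have lipγ : |γ₁ s₁ - γ₁ s₂| ≤ |s₁ - s₂| := hγ₁'.2 s₁ hs₁ s₂ hs₂
    have triB : |γ₁ s₁ - γ₂ s₂| ≤ |γ₁ s₁ - γ₁ s₂| + |γ₁ s₂ - γ₂ s₂| := abs_sub_le _ _ _
    have eqA : |s₁ - s₂| = |h₂ (γ₁ s₁, s₁) - h₂ (γ₂ s₂, s₂)| := by
      have hrw : s₁ - s₂ = -(h₂ (γ₁ s₁, s₁) - h₂ (γ₂ s₂, s₂)) := by
        have := e12.trans e22.symm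
        linarith [this]
      rw [hrw, abs_neg]
    have hA : |s₁ - s₂| ≤ d γ₁ γ₂ / 8 := by
      linarith [eqA, lipγ, triB, eh2, hdd]
    have tri2 : |T γ₁ t - T γ₂ t| ≤
        |γ₁ s₁ - γ₂ s₂| / 2 + |h₁ (γ₁ s₁, s₁) - h₁ (γ₂ s₂, s₂)| := by
      have hrw : T γ₁ t - T γ₂ t =
          -(γ₁ s₁ - γ₂ s₂) / 2 + (h₁ (γ₁ s₁, s₁) - h₁ (γ₂ s₂, s₂)) := by
        rw [← e11, ← e21]; ring
      rw [hrw]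
      refine (abs_add_le _ _).trans ?_
      rw [abs_div, abs_neg]
      simp only [abs_two]
      norm_num
    linarith
  -- sqrt 2 numerics
  have hsq1 : (1:ℝ) ≤ Real.sqrt 2 := by
    nlinarith [Real.sq_sqrt (by norm_num : (0:ℝ) ≤ 2), Real.sqrt_nonneg 2]
  have hsq2 : Real.sqrt 2 < 3/2 := by
    nlinarith [Real.sq_sqrt (by norm_num : (0:ℝ) ≤ 2), Real.sqrt_nonneg 2]
  refine ⟨hmaps, ?_, by linarith, ?_⟩
  · intro γ₁ hγ₁ γ₂ hγ₂
    refine dle _ _ _ fun t ht => ?_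
    have := hcontr γ₁ hγ₁ γ₂ hγ₂ t ht
    have hnn := dnonneg γ₁ γ₂
    nlinarith
  -- fixed point
  · have h0Γ : (fun _ : ℝ => (0:ℝ)) ∈ Γ := by
      rw [hΓ]
      refine ⟨fun t ht => ?_, fun t₁ _ t₂ _ => by simp⟩
      simp only [Set.mem_Icc]
      constructor <;> linarith
    set g : ℕ → ℝ → ℝ := fun n => T^[n] (fun _ => 0) with hg
    have hgΓ : ∀ n, g n ∈ Γ := by
      intro n
      induction n with
      | zero => exact h0Γ
      | succ n ih =>
        have : g (n+1) = T (g n) := by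
          simp only [hg, Function.iterate_succ_apply']
        rw [this]
        exact hmaps _ ih
    have hgsucc : ∀ n, g (n+1) = T (g n) := by
      intro n; simp only [hg, Function.iterate_succ_apply']
    have hdseq : ∀ n, d (g n) (g (n+1)) ≤ (11/16)^n * d (g 0) (g 1) := by
      intro n
      induction n with
      | zero => simp
      | succ n ih =>
        refine dle _ _ _ fun t ht => ?_
        calc |g (n+1) t - g (n+1+1) t|
            = |T (g n) t - T (g (n+1)) t| := by rw [hgsucc (n+1), hgsucc n]
          _ ≤ (11/16) * d (g n) (g (n+1)) :=
              hcontr _ (hgΓ n) _ (hgΓ (n+1)) t ht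
          _ ≤ (11/16) * ((11/16)^n * d (g 0) (g 1)) := by
              have : (0:ℝ) ≤ 11/16 := by norm_num
              exact mul_le_mul_of_nonneg_left ih this
          _ = (11/16)^(n+1) * d (g 0) (g 1) := by ring
    have hud : ∀ t, R₀ ≤ t → ∀ n,
        dist (g n t) (g (n+1) t) ≤ d (g 0) (g 1) * (11/16)^n := by
      intro t ht n
      rw [Real.dist_eq]
      calc |g n t - g (n+1) t| ≤ d (g n) (g (n+1)) := dpt _ (hgΓ n) _ (hgΓ (n+1)) t ht
        _ ≤ (11/16)^n * d (g 0) (g 1) := hdseq n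
        _ = d (g 0) (g 1) * (11/16)^n := by ring
    have hex : ∀ t : ℝ, ∃ L, Tendsto (fun n => g n (max t R₀)) atTop (𝓝 L) := by
      intro t
      exact cauchySeq_tendsto_of_complete
        (cauchySeq_of_le_geometric (11/16) (d (g 0) (g 1)) (by norm_num)
          (hud (max t R₀) (le_max_right _ _)))
    choose γinv hγinv using hex
    have htend : ∀ t, R₀ ≤ t → Tendsto (fun n => g n t) atTop (𝓝 (γinv t)) := by
      intro t ht
      have := hγinv t
      rwa [max_eq_left ht] at this
    have htail : ∀ n, ∀ t, R₀ ≤ t →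
        |g n t - γinv t| ≤ d (g 0) (g 1) * (11/16)^n * (16/5) := by
      intro n t ht
      have := dist_le_of_le_geometric_of_tendsto (11/16) (d (g 0) (g 1))
        (by norm_num) (hud t ht) (htend t ht) n
      rw [Real.dist_eq] at this
      calc |g n t - γinv t| ≤ d (g 0) (g 1) * (11/16)^n / (1 - 11/16) := this
        _ = d (g 0) (g 1) * (11/16)^n * (16/5) := by ring
    have hγinvΓ : γinv ∈ Γ := by
      rw [hΓ]
      constructor
      · intro t ht
        have hub : ∀ n, g n t ≤ R₁ := fun n => by
          have := (hgΓ n); rw [hΓ] at this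
          exact (Set.mem_Icc.mp (this.1 t ht)).2
        have hlb : ∀ n, -R₁ ≤ g n t := fun n => by
          have := (hgΓ n); rw [hΓ] at this
          exact (Set.mem_Icc.mp (this.1 t ht)).1
        exact Set.mem_Icc.mpr ⟨ge_of_tendsto' (htend t ht) hlb,
          le_of_tendsto' (htend t ht) hub⟩
      · intro t₁ ht₁ t₂ ht₂
        have habs : Tendsto (fun n => |g n t₁ - g n t₂|) atTop
            (𝓝 |γinv t₁ - γinv t₂|) := ((htend t₁ ht₁).sub (htend t₂ ht₂)).abs
        refine le_of_tendsto' habs fun n => ?_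
        have := (hgΓ n); rw [hΓ] at this
        exact this.2 t₁ ht₁ t₂ ht₂
    have hfix : ∀ t ∈ Set.Ici R₀, T γinv t = γinv t := by
      intro t ht
      have key : ∀ n, |T γinv t - γinv t| ≤ 5 * d (g 0) (g 1) * (11/16)^n := by
        intro n
        have h1 : |T γinv t - T (g n) t| ≤ (11/16) * d γinv (g n) :=
          hcontr _ hγinvΓ _ (hgΓ n) t ht
        have h2 : d γinv (g n) ≤ d (g 0) (g 1) * (11/16)^n * (16/5) := by
          refine dle _ _ _ fun s hs => ?_
          rw [abs_sub_comm]
          exact htail n s hs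
        have h3 : |g (n+1) t - γinv t| ≤ d (g 0) (g 1) * (11/16)^(n+1) * (16/5) :=
          htail (n+1) t ht
        have h4 : |T γinv t - γinv t| ≤ |T γinv t - g (n+1) t| + |g (n+1) t - γinv t| :=
          abs_sub_le _ _ _
        have h5 : |T γinv t - g (n+1) t| = |T γinv t - T (g n) t| := by
          rw [hgsucc n]
        have hps : ((11:ℝ)/16)^(n+1) = (11/16)^n * (11/16) := pow_succ _ _
        nlinarith [h1, h2, h3, h4, h5, pow_nonneg (by norm_num : (0:ℝ) ≤ 11/16) n,
          dnonneg (g 0) (g 1)]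
      have hlim : Tendsto (fun n => 5 * d (g 0) (g 1) * (11/16:ℝ)^n) atTop (𝓝 0) := by
        have := (tendsto_pow_atTop_nhds_zero_of_lt_one
          (by norm_num : (0:ℝ) ≤ 11/16) (by norm_num : (11/16:ℝ) < 1)).const_mul
          (5 * d (g 0) (g 1))
        simpa using this
      have hle0 : |T γinv t - γinv t| ≤ 0 := ge_of_tendsto' hlim key
      have := le_antisymm hle0 (abs_nonneg _)
      have := abs_eq_zero.mp this
      linarith [sub_eq_zero.mp this]
    refine ⟨γinv, hγinvΓ, hfix, ?_⟩
    intro γ' hγ' hfix' t ht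
    have hDle : d γ' γinv ≤ (11/16) * d γ' γinv := by
      refine dle _ _ _ fun s hs => ?_
      rw [← hfix' s hs, ← hfix s hs]
      exact hcontr _ hγ' _ hγinvΓ s hs
    have hDnn := dnonneg γ' γinv
    have hD0 : d γ' γinv ≤ 0 := by linarith
    have := dpt γ' hγ' γinv hγinvΓ t ht
    have : |γ' t - γinv t| ≤ 0 := by linarith
    have := le_antisymm this (abs_nonneg _)
    linarith [sub_eq_zero.mp (abs_eq_zero.mp this)]
end

section
/- Let $e(s) = \ln(1 + 2^{-10/3} e^{-2s})$ and $E(s) = \ln(1 + 2^{-42/9} e^{6s + 2e(s)})$. Then for all $s \in [-0.1, -0.01]$: $|E(s)| < 1/16$, $|E'(s)| < 3/8$, the functions $s \mapsto 4s + 2e(s) - E(s)$ and $s \mapsto -(-s + e(s) + E(s))$ are strictly increasing, and $-s + e(s) + \ln 2^{14/3} + E(s) > 3$. -/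
open Real

noncomputable def eeAux (s : ℝ) : ℝ := log (1 + (2 : ℝ) ^ (-(10 : ℝ) / 3) * exp (-2 * s))
noncomputable def EEAux (s : ℝ) : ℝ :=
  log (1 + (2 : ℝ) ^ (-(42 : ℝ) / 9) * exp (6 * s + 2 * eeAux s))

noncomputable def aA : ℝ := (2 : ℝ) ^ (-(10 : ℝ) / 3)
noncomputable def cC : ℝ := (2 : ℝ) ^ (-(42 : ℝ) / 9)

lemma aA_pos : 0 < aA := rpow_pos_of_pos (by norm_num) _
lemma cC_pos : 0 < cC := rpow_pos_of_pos (by norm_num) _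

lemma aA_lt : aA < 1 / 10 := by
  have h3 : aA ^ (3 : ℕ) = (2 : ℝ) ^ (-(10 : ℝ)) := by
    rw [aA, ← Real.rpow_natCast ((2:ℝ) ^ (-(10:ℝ)/3)) 3, ← Real.rpow_mul (by norm_num)]
    norm_num
  have h4 : (2 : ℝ) ^ (-(10 : ℝ)) = ((2 : ℝ) ^ (10 : ℕ))⁻¹ := by
    rw [← Real.rpow_natCast 2 10, ← Real.rpow_neg (by norm_num)]
    norm_num
  refine lt_of_pow_lt_pow_left₀ 3 (by norm_num) ?_
  rw [h3, h4]; norm_num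

lemma cC_lt : cC < 1 / 25 := by
  have h3 : cC ^ (3 : ℕ) = (2 : ℝ) ^ (-(14 : ℝ)) := by
    rw [cC, ← Real.rpow_natCast ((2:ℝ) ^ (-(42:ℝ)/9)) 3, ← Real.rpow_mul (by norm_num)]
    norm_num
  have h4 : (2 : ℝ) ^ (-(14 : ℝ)) = ((2 : ℝ) ^ (14 : ℕ))⁻¹ := by
    rw [← Real.rpow_natCast 2 14, ← Real.rpow_neg (by norm_num)]
    norm_num
  refine lt_of_pow_lt_pow_left₀ 3 (by norm_num) ?_
  rw [h3, h4]; norm_num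

lemma exp_fifth_lt : exp (1 / 5) < 5 / 4 := by
  have h : (-(1:ℝ)/5) + 1 < exp (-(1:ℝ)/5) := Real.add_one_lt_exp (by norm_num)
  have h2 : exp (-(1:ℝ)/5) = (exp (1/5))⁻¹ := by
    rw [← Real.exp_neg]; norm_num
  have hpos : 0 < exp ((1:ℝ)/5) := exp_pos _
  rw [h2] at h
  have h3 := mul_lt_mul_of_pos_left h hpos
  rw [mul_inv_cancel₀ (ne_of_gt hpos)] at h3
  nlinarith

noncomputable def ee' (s : ℝ) : ℝ := -2 * aA * exp (-2 * s) / (1 + aA * exp (-2 * s))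
noncomputable def EE' (s : ℝ) : ℝ :=
  cC * exp (6 * s + 2 * eeAux s) * (6 + 2 * ee' s) / (1 + cC * exp (6 * s + 2 * eeAux s))

lemma inner_e_pos (s : ℝ) : 0 < 1 + aA * exp (-2 * s) := by
  nlinarith [mul_pos aA_pos (exp_pos (-2 * s))]
lemma inner_E_pos (s : ℝ) : 0 < 1 + cC * exp (6 * s + 2 * eeAux s) := by
  nlinarith [mul_pos cC_pos (exp_pos (6 * s + 2 * eeAux s))]

lemma hasDerivAt_ee (s : ℝ) : HasDerivAt eeAux (ee' s) s := by
  have h1 : HasDerivAt (fun s : ℝ => -2 * s) (-2) s := by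
    simpa using (hasDerivAt_id s).const_mul (-2)
  have h3 := ((h1.exp.const_mul aA).const_add 1).log (ne_of_gt (inner_e_pos s))
  have : eeAux = fun s => log (1 + aA * exp (-2 * s)) := rfl
  rw [this, ee']
  convert h3 using 1
  ring

lemma hasDerivAt_EE (s : ℝ) : HasDerivAt EEAux (EE' s) s := by
  have hg : HasDerivAt (fun s : ℝ => 6 * s + 2 * eeAux s) (6 + 2 * ee' s) s := by
    have h1 : HasDerivAt (fun s : ℝ => 6 * s) 6 s := by
      simpa using (hasDerivAt_id s).const_mul 6
    exact h1.add ((hasDerivAt_ee s).const_mul 2)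
  have h3 := ((hg.exp.const_mul cC).const_add 1).log (ne_of_gt (inner_E_pos s))
  have : EEAux = fun s => log (1 + cC * exp (6 * s + 2 * eeAux s)) := rfl
  rw [this, EE']
  convert h3 using 1
  ring

section Bounds
variable {s : ℝ} (hs : s ∈ Set.Icc (-0.1 : ℝ) (-0.01))
include hs

lemma hs1 : -(1:ℝ)/10 ≤ s := by have := hs.1; norm_num at this ⊢; linarith
lemma hs2 : s ≤ -(1:ℝ)/100 := by have := hs.2; norm_num at this ⊢; linarith

lemma ue_bound : aA * exp (-2 * s) < 1 / 8 := by
  have h1 : exp (-2 * s) ≤ exp (1 / 5) := exp_le_exp.mpr (by linarith [hs1 hs])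
  have h2 : exp (-2 * s) < 5 / 4 := lt_of_le_of_lt h1 exp_fifth_lt
  nlinarith [aA_pos, aA_lt, exp_pos (-2 * s)]

lemma ee_pos : 0 < eeAux s := by
  have : (1:ℝ) < 1 + aA * exp (-2 * s) := by nlinarith [aA_pos, exp_pos (-2 * s)]
  exact log_pos this

lemma ee_le : eeAux s < 1 / 8 := by
  have := Real.log_le_sub_one_of_pos (inner_e_pos s)
  have := ue_bound hs
  calc eeAux s ≤ (1 + aA * exp (-2 * s)) - 1 := Real.log_le_sub_one_of_pos (inner_e_pos s)
    _ < 1 / 8 := by linarith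

lemma ee'_neg : ee' s < 0 := by
  rw [ee']
  apply div_neg_of_neg_of_pos _ (inner_e_pos s)
  nlinarith [aA_pos, exp_pos (-2 * s)]

lemma ee'_ge : -(1:ℝ)/4 < ee' s := by
  rw [ee', lt_div_iff₀ (inner_e_pos s)]
  have hu0 : 0 < aA * exp (-2 * s) := mul_pos aA_pos (exp_pos _)
  have hu1 : aA * exp (-2 * s) < 1 / 8 := ue_bound hs
  nlinarith

lemma uE_bound : cC * exp (6 * s + 2 * eeAux s) < 1 / 20 := by
  have harg : 6 * s + 2 * eeAux s ≤ 1 / 5 := by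
    have := ee_le hs; have := hs2 hs; linarith
  have h1 : exp (6 * s + 2 * eeAux s) ≤ exp (1/5) := exp_le_exp.mpr harg
  have h2 : exp (6 * s + 2 * eeAux s) < 5 / 4 := lt_of_le_of_lt h1 exp_fifth_lt
  nlinarith [cC_pos, cC_lt, exp_pos (6 * s + 2 * eeAux s)]

lemma EE_pos : 0 < EEAux s := by
  have : (1:ℝ) < 1 + cC * exp (6 * s + 2 * eeAux s) := by
    nlinarith [cC_pos, exp_pos (6 * s + 2 * eeAux s)]
  exact log_pos this

lemma EE_le : EEAux s < 1 / 20 := by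
  have h := uE_bound hs
  calc EEAux s ≤ (1 + cC * exp (6 * s + 2 * eeAux s)) - 1 :=
        Real.log_le_sub_one_of_pos (inner_E_pos s)
    _ < 1 / 20 := by linarith

lemma EE'_pos : 0 < EE' s := by
  rw [EE']
  apply div_pos _ (inner_E_pos s)
  have h1 : 0 < 6 + 2 * ee' s := by have := ee'_ge hs; linarith
  have : 0 < cC * exp (6 * s + 2 * eeAux s) := mul_pos cC_pos (exp_pos _)
  nlinarith

lemma EE'_le : EE' s < 3 / 10 := by
  rw [EE', div_lt_iff₀ (inner_E_pos s)]
  have hu0 : 0 < cC * exp (6 * s + 2 * eeAux s) := mul_pos cC_pos (exp_pos _)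
  have hu1 : cC * exp (6 * s + 2 * eeAux s) < 1 / 20 := uE_bound hs
  have he1 : ee' s < 0 := ee'_neg hs
  have he2 : -(1:ℝ)/4 < ee' s := ee'_ge hs
  nlinarith

end Bounds

open Real in
/-- Estimates on `E(s) = ln(1 + 2^{-42/9} e^{6s + 2e(s)})` for `s ∈ [-0.1,-0.01]`:
`|E| < 1/16`, `|E'| < 3/8`, monotonicity of the two coordinate functions of
`F²(J)`, and the lower bound `b > 3`. -/
theorem stmt_14 (e E : ℝ → ℝ)
    (he : ∀ s : ℝ, e s = log (1 + (2 : ℝ) ^ (-(10 : ℝ) / 3) * exp (-2 * s)))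
    (hE : ∀ s : ℝ, E s = log (1 + (2 : ℝ) ^ (-(42 : ℝ) / 9) * exp (6 * s + 2 * e s))) :
    (∀ s ∈ Set.Icc (-0.1 : ℝ) (-0.01), |E s| < 1 / 16 ∧ |deriv E s| < 3 / 8) ∧
    StrictMonoOn (fun s => 4 * s + 2 * e s - E s) (Set.Icc (-0.1 : ℝ) (-0.01)) ∧
    StrictMonoOn (fun s => -(-s + e s + E s)) (Set.Icc (-0.1 : ℝ) (-0.01)) ∧
    (∀ s ∈ Set.Icc (-0.1 : ℝ) (-0.01),
      3 < -s + e s + log ((2 : ℝ) ^ ((14 : ℝ) / 3)) + E s) := by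
  have hee : e = eeAux := funext he
  subst hee
  have hEE : E = EEAux := funext fun s => by rw [hE]; rfl
  subst hEE
  refine ⟨?_, ?_, ?_, ?_⟩
  · intro s hs
    constructor
    · rw [abs_of_pos (EE_pos hs)]
      have := EE_le hs; linarith
    · rw [(hasDerivAt_EE s).deriv, abs_of_pos (EE'_pos hs)]
      have := EE'_le hs; linarith
  · apply strictMonoOn_of_deriv_pos (convex_Icc _ _)
    · apply Continuous.continuousOn
      have : Differentiable ℝ (fun s => 4 * s + 2 * eeAux s - EEAux s) := fun s =>
        ((((hasDerivAt_id s).const_mul 4).add ((hasDerivAt_ee s).const_mul 2)).sub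
          (hasDerivAt_EE s)).differentiableAt
      exact this.continuous
    · intro x hx
      rw [interior_Icc] at hx
      have hx' : x ∈ Set.Icc (-0.1 : ℝ) (-0.01) := Set.mem_Icc.mpr ⟨le_of_lt hx.1, le_of_lt hx.2⟩
      have hd : HasDerivAt (fun s => 4 * s + 2 * eeAux s - EEAux s)
          (4 * 1 + 2 * ee' x - EE' x) x :=
        (((hasDerivAt_id x).const_mul 4).add ((hasDerivAt_ee x).const_mul 2)).sub
          (hasDerivAt_EE x)
      rw [hd.deriv]
      have h1 := ee'_ge hx'
      have h2 := EE'_le hx'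
      linarith
  · apply strictMonoOn_of_deriv_pos (convex_Icc _ _)
    · apply Continuous.continuousOn
      have : Differentiable ℝ (fun s => -(-s + eeAux s + EEAux s)) := fun s =>
        ((((hasDerivAt_id s).neg).add (hasDerivAt_ee s)).add (hasDerivAt_EE s)).neg.differentiableAt
      exact this.continuous
    · intro x hx
      rw [interior_Icc] at hx
      have hx' : x ∈ Set.Icc (-0.1 : ℝ) (-0.01) := Set.mem_Icc.mpr ⟨le_of_lt hx.1, le_of_lt hx.2⟩
      have hd : HasDerivAt (fun s => -(-s + eeAux s + EEAux s))
          (-(-1 + ee' x + EE' x)) x :=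
        ((((hasDerivAt_id x).neg).add (hasDerivAt_ee x)).add (hasDerivAt_EE x)).neg
      rw [hd.deriv]
      have h1 := ee'_neg hx'
      have h2 := EE'_le hx'
      linarith
  · intro s hs
    have h1 : log ((2 : ℝ) ^ ((14 : ℝ) / 3)) = (14 / 3) * log 2 :=
      Real.log_rpow (by norm_num) _
    have h2 := Real.log_two_gt_d9
    have h3 := ee_pos hs
    have h4 := EE_pos hs
    have h5 := hs2 hs
    rw [h1]
    nlinarith
end
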